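/- For every integer k with 0 <= k <= floor((n-3)/2), the vector P_k = -(n-2k-1)(n-2k-2) Z_{n-k} + sum_{i=k+1}^{n-k-1} [2(i-k-1) Z_i + (2i-n)(X_i + Y_i)] is a nonzero eigenvector of the adjacency matrix of SR(3,n) with eigenvalue k-2. -/

import Mathlib

open Finset

abbrev SRVert (d n : ℕ) : Type := {x : Fin d → ℕ // ∑ i, x i = n}

noncomputable instance SRVert.fintype (d n : ℕ) : Fintype (SRVert d n) :=
  Fintype.ofInjective
    (fun x : SRVert d n => fun i => (⟨x.1 i, by
      have h := Finset.single_le_sum (f := x.1)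
        (fun j _ => Nat.zero_le (x.1 j)) (Finset.mem_univ i)
      have h2 := x.2
      omega⟩ : Fin (n+1)))
    (fun x y h => Subtype.ext (funext fun i => congrArg Fin.val (congrFun h i)))

def SR (d n : ℕ) : SimpleGraph (SRVert d n) where
  Adj x y := (Finset.univ.filter fun i => x.1 i ≠ y.1 i).card = 2
  symm := by
    constructor
    intro x y h
    rw [show (Finset.univ.filter fun i => y.1 i ≠ x.1 i)
        = (Finset.univ.filter fun i => x.1 i ≠ y.1 i) by
      apply Finset.filter_congr; intro i _; simp [ne_comm]]
    exact h
  loopless := by constructor; intro z h; simp at h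

instance (d n : ℕ) : DecidableRel (SR d n).Adj :=
  fun x y => inferInstanceAs (Decidable (_ = 2))

def Xv (n i : ℕ) : SRVert 3 n → ℝ := fun v => if v.1 0 = i then 1 else 0

def Yv (n j : ℕ) : SRVert 3 n → ℝ := fun v => if v.1 1 = j then 1 else 0

def Zv (n k : ℕ) : SRVert 3 n → ℝ := fun v => if v.1 2 = k then 1 else 0

def Jv (n : ℕ) : SRVert 3 n → ℝ := fun _ => 1

def ev {d n : ℕ} (v : SRVert d n) : SRVert d n → ℝ := fun w => if w = v then 1 else 0

/-!
A vector of the form `v ↦ ∑ r, g r (v r)`, i.e. a combination of the `X_i`, `Y_j`, `Z_k`, is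
mapped by `A` to a vector of the same form. Since the coordinates sum to `n`, two vertices that
agree in two coordinates are equal, so distinct vertices are adjacent iff they agree in exactly
one coordinate; and for `r ≠ s` the vertices `w` with `w s = x` are parametrised by
`w r ∈ [0, n - x]`. Hence `A (∑ r, g r (v r)) = μ ∑ r, g r (v r)` reduces to one identity per
coordinate `s` and value `x`, between `g s x` and the partial sums up to `n - x` of the other
`g r`. For `P_k` these partial sums have simple closed forms, and the identities follow.
`P_k` is nonzero since its value at `(0, k, n - k)` is `-(n - 2k - 1)(n - 2k - 2)`.
-/

namespace SRVert

variable {n : ℕ}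

lemma coord_sum (v : SRVert 3 n) : v.1 0 + v.1 1 + v.1 2 = n := by
  simpa [Fin.sum_univ_three] using v.2

lemma coord_le (v : SRVert 3 n) (r : Fin 3) : v.1 r ≤ n := by
  have := coord_sum v
  fin_cases r <;> simp <;> omega

lemma coord_add_coord_le (v : SRVert 3 n) {r s : Fin 3} (hrs : r ≠ s) :
    v.1 r + v.1 s ≤ n := by
  have := coord_sum v
  fin_cases r <;> fin_cases s <;> simp_all <;> omega

lemma eq_of_coord_eq {v w : SRVert 3 n} {r s : Fin 3} (hrs : r ≠ s)
    (hr : v.1 r = w.1 r) (hs : v.1 s = w.1 s) : v = w := by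
  have := coord_sum v
  have := coord_sum w
  ext j
  fin_cases r <;> fin_cases s <;> fin_cases j <;> simp_all <;> omega

lemma sum_ite_coord_eq {r s : Fin 3} (hrs : r ≠ s) {x : ℕ} (hx : x ≤ n) (f : ℕ → ℝ) :
    ∑ w : SRVert 3 n, (if x = w.1 s then f (w.1 r) else 0)
      = ∑ i ∈ range (n - x + 1), f i := by
  rw [← sum_filter]
  refine sum_bij' (fun w _ => w.1 r)
    (fun i hi => ⟨fun j => if j = s then x else if j = r then i else n - x - i, ?_⟩)
    ?_ ?_ ?_ ?_ (fun _ _ => rfl)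
  · rw [mem_range] at hi
    fin_cases r <;> fin_cases s <;> simp_all [Fin.sum_univ_three] <;> omega
  · intro w hw
    rw [mem_filter] at hw
    have := coord_add_coord_le w hrs
    rw [mem_range]
    omega
  · intro i _
    simp
  · intro w hw
    rw [mem_filter] at hw
    exact eq_of_coord_eq hrs (by simp [hrs]) (by simp [hw.2])
  · intro i _
    simp [hrs]

lemma sum_ite_coord_eq_const (s : Fin 3) {x : ℕ} (hx : x ≤ n) (c : ℝ) :
    ∑ w : SRVert 3 n, (if x = w.1 s then c else 0) = ((n : ℝ) - x + 1) * c := by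
  rw [sum_ite_coord_eq (r := s + 1) (by fin_cases s <;> decide) hx fun _ => c,
    sum_const, card_range, nsmul_eq_mul, Nat.cast_add_one, Nat.cast_sub hx]

end SRVert

open scoped Matrix

section LineVectors

variable {n : ℕ}

lemma SR_three_adj_indicator (v w : SRVert 3 n) :
    (if (SR 3 n).Adj v w then 1 else 0 : ℝ)
      = ∑ r, (if v.1 r = w.1 r then 1 else 0) - 3 * (if v = w then 1 else 0) := by
  have := SRVert.coord_sum v
  have := SRVert.coord_sum w
  simp only [SR, card_filter, Fin.sum_univ_three, Subtype.ext_iff, funext_iff,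
    Fin.forall_fin_succ]
  split_ifs <;> simp_all <;> norm_num <;> omega

lemma SR_three_adjMatrix_mulVec_apply (f : SRVert 3 n → ℝ) (v : SRVert 3 n) :
    ((SR 3 n).adjMatrix ℝ *ᵥ f) v
      = ∑ r, ∑ w, (if v.1 r = w.1 r then f w else 0) - 3 * f v := by
  simp only [Matrix.mulVec, dotProduct, SimpleGraph.adjMatrix_apply, SR_three_adj_indicator,
    sub_mul, sum_mul, ite_mul, one_mul, zero_mul, sum_sub_distrib, mul_assoc,
    ← mul_sum, sum_ite_eq, mem_univ, if_true]
  rw [sum_comm]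

/-- The vector `∑ i, (g 0 i • X_i + g 1 i • Y_i + g 2 i • Z_i)`. -/
def lineVec (g : Fin 3 → ℕ → ℝ) : SRVert 3 n → ℝ := fun v => ∑ r, g r (v.1 r)

lemma adjMatrix_mulVec_lineVec_apply (g : Fin 3 → ℕ → ℝ) (v : SRVert 3 n) :
    ((SR 3 n).adjMatrix ℝ *ᵥ lineVec g) v
      = ∑ s, (((n : ℝ) - v.1 s - 2) * g s (v.1 s)
          + ∑ r ∈ univ.erase s, ∑ i ∈ range (n - v.1 s + 1), g r i) := by
  have hrow : ∀ s, ∑ w : SRVert 3 n, (if v.1 s = w.1 s then lineVec g w else 0)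
      = ((n : ℝ) - v.1 s + 1) * g s (v.1 s)
          + ∑ r ∈ univ.erase s, ∑ i ∈ range (n - v.1 s + 1), g r i := by
    intro s
    have hv := SRVert.coord_le v s
    simp only [lineVec, ite_sum_zero]
    rw [sum_comm, ← add_sum_erase _ _ (mem_univ s)]
    congr 1
    · rw [← SRVert.sum_ite_coord_eq_const s hv]
      refine sum_congr rfl fun w _ => ?_
      split_ifs with h <;> simp [h]
    · exact sum_congr rfl fun r hr => SRVert.sum_ite_coord_eq (ne_of_mem_erase hr) hv (g r)
  rw [SR_three_adjMatrix_mulVec_apply, sum_congr rfl fun s _ => hrow s, lineVec, mul_sum,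
    ← sum_sub_distrib]
  refine sum_congr rfl fun s _ => ?_
  ring

lemma adjMatrix_mulVec_lineVec_eq_smul (g : Fin 3 → ℕ → ℝ) (μ : ℝ)
    (h : ∀ s, ∀ x ≤ n, ((n : ℝ) - x - 2) * g s x
      + ∑ r ∈ univ.erase s, ∑ i ∈ range (n - x + 1), g r i = μ * g s x) :
    (SR 3 n).adjMatrix ℝ *ᵥ lineVec g = μ • lineVec g := by
  funext v
  rw [adjMatrix_mulVec_lineVec_apply, Pi.smul_apply, smul_eq_mul, lineVec, mul_sum]
  exact sum_congr rfl fun s _ => h s _ (SRVert.coord_le v s)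

end LineVectors

section Pk

variable (n k : ℕ)

/-- The coefficient of `X_i` and of `Y_i` in `P_k`. -/
def coeffXY (i : ℕ) : ℝ := if i ∈ Icc (k + 1) (n - k - 1) then 2 * i - n else 0

/-- The coefficient of `Z_i` in `P_k`. -/
def coeffZ (i : ℕ) : ℝ :=
  (if i ∈ Icc (k + 1) (n - k - 1) then 2 * ((i : ℝ) - k - 1) else 0)
    + if i = n - k then -(((n : ℝ) - 2 * k - 1) * ((n : ℝ) - 2 * k - 2)) else 0

lemma sum_range_coeffXY (m : ℕ) :
    ∑ i ∈ range (m + 1), coeffXY n k i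
      = if m ∈ Icc (k + 1) (n - k - 1) then ((m : ℝ) - k) * (m + k + 1 - n) else 0 := by
  induction m with
  | zero => simp [coeffXY]
  | succ m ih =>
    rw [sum_range_succ, ih, coeffXY]
    simp only [mem_Icc]
    rcases (by omega : m ≠ k ∧ m + k + 1 ≠ n ∨ m = k ∨ m + k + 1 = n) with h | rfl | rfl
    all_goals split_ifs <;> first | omega | (push_cast; ring1)

lemma sum_range_coeffZ (hk : 2 * k + 2 ≤ n) (m : ℕ) :
    ∑ i ∈ range (m + 1), coeffZ n k i
      = if m ∈ Icc (k + 1) (n - k - 1) then ((m : ℝ) - k - 1) * (m - k) else 0 := by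
  induction m with
  | zero => simp [coeffZ]; omega
  | succ m ih =>
    rw [sum_range_succ, ih, coeffZ]
    simp only [mem_Icc]
    rcases (by omega : m ≠ k ∧ m + k + 1 ≠ n ∨ m = k ∨ m + k + 1 = n) with h | rfl | rfl
    all_goals split_ifs <;> first | omega | (push_cast; ring1)

lemma coeffXY_eigen (hk : 2 * k + 2 ≤ n) {x : ℕ} (hx : x ≤ n) :
    ((n : ℝ) - x - 2) * coeffXY n k x
      + (∑ i ∈ range (n - x + 1), coeffXY n k i + ∑ i ∈ range (n - x + 1), coeffZ n k i)
      = ((k : ℝ) - 2) * coeffXY n k x := by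
  rw [sum_range_coeffXY, sum_range_coeffZ n k hk, coeffXY]
  simp only [mem_Icc]
  split_ifs <;> first | omega | (push_cast [Nat.cast_sub hx]; ring1)

lemma coeffZ_eigen (hk : 2 * k + 2 ≤ n) {x : ℕ} (hx : x ≤ n) :
    ((n : ℝ) - x - 2) * coeffZ n k x
      + (∑ i ∈ range (n - x + 1), coeffXY n k i + ∑ i ∈ range (n - x + 1), coeffXY n k i)
      = ((k : ℝ) - 2) * coeffZ n k x := by
  rw [sum_range_coeffXY, coeffZ]
  simp only [mem_Icc]
  rcases (by omega : x + k ≠ n ∨ x + k = n) with h | rfl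
  all_goals split_ifs <;> first | omega | (push_cast [Nat.cast_sub hx]; ring1)

lemma Pk_eq_lineVec :
    (-(((n : ℝ) - 2*k - 1) * ((n : ℝ) - 2*k - 2))) • Zv n (n - k)
        + ∑ i ∈ Icc (k+1) (n-k-1),
            ((2 * ((i : ℝ) - k - 1)) • Zv n i + (2*(i : ℝ) - n) • (Xv n i + Yv n i))
      = lineVec ![coeffXY n k, coeffXY n k, coeffZ n k] := by
  funext v
  simp only [lineVec, Fin.sum_univ_three, Matrix.cons_val_zero, Matrix.cons_val_one,
    Matrix.cons_val_two, Matrix.head_cons, Matrix.tail_cons, coeffXY, coeffZ, Xv, Yv, Zv,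
    Finset.sum_apply, Pi.add_apply, Pi.smul_apply, smul_eq_mul, sum_add_distrib, mul_add,
    mul_ite, mul_one, mul_zero, sum_ite_eq]
  ring

lemma lineVec_coeff_ne_zero (hk : 2 * k + 3 ≤ n) :
    lineVec (n := n) ![coeffXY n k, coeffXY n k, coeffZ n k] ≠ 0 := by
  intro h
  have hv : ∑ r, ![0, k, n - k] r = n := by simp [Fin.sum_univ_three]; omega
  have hP := congrFun h ⟨_, hv⟩
  simp [lineVec, Fin.sum_univ_three, coeffXY, coeffZ] at hP
  rw [if_neg (by omega)] at hP
  have hk' : (2 * k + 3 : ℝ) ≤ n := by exact_mod_cast hk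
  nlinarith

end Pk

/-- for `0 ≤ k ≤ ⌊(n-3)/2⌋`, the vector `P_k` is a nonzero
eigenvector of the adjacency matrix of `SR(3,n)` with eigenvalue `k - 2`. -/
theorem P_eigenvector (n k : ℕ) (hk : 2 * k + 3 ≤ n) :
    (-(((n : ℝ) - 2*k - 1) * ((n : ℝ) - 2*k - 2))) • Zv n (n - k)
        + ∑ i ∈ Finset.Icc (k+1) (n-k-1),
            ((2 * ((i : ℝ) - k - 1)) • Zv n i + (2*(i : ℝ) - n) • (Xv n i + Yv n i)) ≠ 0 ∧
    ((SR 3 n).adjMatrix ℝ).mulVec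
        ((-(((n : ℝ) - 2*k - 1) * ((n : ℝ) - 2*k - 2))) • Zv n (n - k)
          + ∑ i ∈ Finset.Icc (k+1) (n-k-1),
              ((2 * ((i : ℝ) - k - 1)) • Zv n i + (2*(i : ℝ) - n) • (Xv n i + Yv n i)))
      = ((k : ℝ) - 2) •
        ((-(((n : ℝ) - 2*k - 1) * ((n : ℝ) - 2*k - 2))) • Zv n (n - k)
          + ∑ i ∈ Finset.Icc (k+1) (n-k-1),
              ((2 * ((i : ℝ) - k - 1)) • Zv n i + (2*(i : ℝ) - n) • (Xv n i + Yv n i))) := by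
  have hk₂ : 2 * k + 2 ≤ n := by omega
  rw [Pk_eq_lineVec]
  refine ⟨lineVec_coeff_ne_zero n k hk, adjMatrix_mulVec_lineVec_eq_smul _ _ fun s x hx => ?_⟩
  fin_cases s <;>
    simp only [Fin.zero_eta, Fin.mk_one, Fin.reduceFinMk, Fin.isValue, Matrix.cons_val',
      Matrix.cons_val_fin_one, Matrix.cons_val_zero, Matrix.cons_val_one, Matrix.cons_val,
      mem_univ, sum_erase_eq_sub, Fin.sum_univ_three, add_sub_cancel_right]
  · linear_combination coeffXY_eigen n k hk₂ hx
  · linear_combination coeffXY_eigen n k hk₂ hx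
  · linear_combination coeffZ_eigen n k hk₂ hx
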